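/- arXiv:2310.02073 — 2 statements merged into one kernel-verified Lean document; each statement's English description precedes it below -/
import Mathlib

section
/- Let p be an odd prime, G a finite p-group, and k ≥ 0. Then η_{k+1}(G)/(η_{k+1}(G)^p η_k(G)) = Z(G/(η_{k+1}(G)^p η_k(G))), where Z denotes the center. -/
/-- The subgroup generated by `p`-th powers of elements of `N`. -/
def pPow {G : Type*} [Group G] (p : ℕ) (N : Subgroup G) : Subgroup G :=
  Subgroup.closure ((fun x => x ^ p) '' (N : Set G))

theorem pPow_normal {G : Type*} [Group G] (p : ℕ) {N : Subgroup G} (hN : N.Normal) :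
    (pPow p N).Normal := by
  constructor
  intro x hx g
  have h : pPow p N ≤ Subgroup.comap (MulAut.conj g).toMonoidHom (pPow p N) := by
    rw [pPow, Subgroup.closure_le]
    rintro - ⟨n, hn, rfl⟩
    have : (MulAut.conj g) (n ^ p) = (g * n * g⁻¹) ^ p := by
      simp [MulAut.conj_apply, conj_pow]
    refine Subgroup.mem_comap.2 ?_
    show (MulAut.conj g) (n ^ p) ∈ _
    rw [this]
    exact Subgroup.subset_closure ⟨g * n * g⁻¹, hN.conj_mem n hn g, rfl⟩
  simpa using h hx

theorem normal_sSup {G : Type*} [Group G] {S : Set (Subgroup G)}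
    (hS : ∀ N ∈ S, N.Normal) : (sSup S).Normal := by
  constructor
  intro x hx g
  have h : sSup S ≤ Subgroup.comap (MulAut.conj g).toMonoidHom (sSup S) := by
    refine sSup_le fun N hN => le_trans ?_ (Subgroup.comap_mono (le_sSup hN))
    intro n hn
    exact Subgroup.mem_comap.2 (by simpa using (hS N hN).conj_mem n hn g)
  simpa using h hx

/-- The upper η-series: `η₀ = 1`, and `η_{i+1}/η_i = η(G/η_i)` is the product of all
powerfully embedded subgroups of `G/η_i`. -/
def etaUp (p : ℕ) (G : Type*) [Group G] : ℕ → Subgroup G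
  | 0 => ⊥
  | i + 1 => sSup {N : Subgroup G | N.Normal ∧ ⁅N, (⊤ : Subgroup G)⁆ ≤ pPow p N ⊔ etaUp p G i}

instance etaUp_normal (p : ℕ) (G : Type*) [Group G] (i : ℕ) : (etaUp p G i).Normal := by
  cases i with
  | zero => show (⊥ : Subgroup G).Normal; infer_instance
  | succ i => exact normal_sSup fun N hN => hN.1

/-- The powerful class of `G`. -/
noncomputable def pwc (p : ℕ) (G : Type*) [Group G] : ℕ := sInf {k | etaUp p G k = ⊤}

/-- Iterated commutator `[N, G, G, ..., G]` with `i` copies of `G`. -/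
def itComm {G : Type*} [Group G] (N : Subgroup G) : ℕ → Subgroup G
  | 0 => N
  | i + 1 => ⁅itComm N i, (⊤ : Subgroup G)⁆

/-- `N` is PF-embedded in `G`: it admits a potent filtration. -/
def PFEmbedded {G : Type*} [Group G] (p : ℕ) (N : Subgroup G) : Prop :=
  ∃ (s : ℕ) (M : ℕ → Subgroup G), M 0 = N ∧ M s = ⊥ ∧
    (∀ i, M (i + 1) ≤ M i) ∧ (∀ i, (M i).Normal) ∧
    (∀ i, ⁅M i, (⊤ : Subgroup G)⁆ ≤ M (i + 1)) ∧
    (∀ i, itComm (M i) (p - 1) ≤ pPow p (M (i + 1)))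

instance instK (p : ℕ) (G : Type*) [Group G] (k : ℕ) :
    (pPow p (etaUp p G (k + 1)) ⊔ etaUp p G k).Normal :=
  @Subgroup.sup_normal _ _ _ _ (pPow_normal p (etaUp_normal p G (k + 1))) (etaUp_normal p G k)

/-! Put `K = η_{k+1}^p η_k` and let `Z` be the preimage of `Z(G/K)`, the largest subgroup with
`[Z, G] ≤ K`. Every member `N` of the family whose supremum is `η_{k+1}` satisfies
`[N, G] ≤ N^p η_k ≤ K`, so `η_{k+1} ≤ Z`; conversely `[Z, G] ≤ K ≤ Z^p η_k`, so `Z` itself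
belongs to that family and `Z ≤ η_{k+1}`. -/

open QuotientGroup

theorem pPow_mono {G : Type*} [Group G] (p : ℕ) {N M : Subgroup G} (h : N ≤ M) :
    pPow p N ≤ pPow p M :=
  Subgroup.closure_mono (Set.image_mono h)

theorem Subgroup.commutator_top_le_iff_le_upperCentralSeriesStep {G : Type*} [Group G]
    {H N : Subgroup G} [N.Normal] : ⁅H, ⊤⁆ ≤ N ↔ H ≤ upperCentralSeriesStep N := by
  rw [commutator_le]
  exact ⟨fun h x hx y => h x hx y (mem_top y), fun h x hx y _ => h hx y⟩

instance Subgroup.upperCentralSeriesStep_normal {G : Type*} [Group G] (N : Subgroup G)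
    [N.Normal] : (upperCentralSeriesStep N).Normal := by
  rw [upperCentralSeriesStep_eq_comap_center]
  infer_instance

theorem Subgroup.map_mk'_upperCentralSeriesStep {G : Type*} [Group G] (N : Subgroup G)
    [N.Normal] : (upperCentralSeriesStep N).map (mk' N) = center (G ⧸ N) := by
  rw [upperCentralSeriesStep_eq_comap_center]
  exact map_comap_eq_self_of_surjective (mk'_surjective N) _

section etaUp

variable {p : ℕ} {G : Type*} [Group G] {i : ℕ}

theorem le_etaUp_succ {N : Subgroup G} (hN : N.Normal)
    (h : ⁅N, ⊤⁆ ≤ pPow p N ⊔ etaUp p G i) : N ≤ etaUp p G (i + 1) :=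
  le_sSup ⟨hN, h⟩

theorem commutator_etaUp_succ_le :
    ⁅etaUp p G (i + 1), ⊤⁆ ≤ pPow p (etaUp p G (i + 1)) ⊔ etaUp p G i := by
  rw [Subgroup.commutator_top_le_iff_le_upperCentralSeriesStep]
  refine sSup_le fun N hN => ?_
  rw [← Subgroup.commutator_top_le_iff_le_upperCentralSeriesStep]
  exact hN.2.trans (sup_le_sup_right (pPow_mono p (le_sSup hN)) _)

theorem etaUp_succ_eq_upperCentralSeriesStep :
    etaUp p G (i + 1) =
      Subgroup.upperCentralSeriesStep (pPow p (etaUp p G (i + 1)) ⊔ etaUp p G i) := by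
  set K := pPow p (etaUp p G (i + 1)) ⊔ etaUp p G i
  have hle : etaUp p G (i + 1) ≤ Subgroup.upperCentralSeriesStep K :=
    Subgroup.commutator_top_le_iff_le_upperCentralSeriesStep.mp commutator_etaUp_succ_le
  refine le_antisymm hle (le_etaUp_succ inferInstance ?_)
  calc ⁅Subgroup.upperCentralSeriesStep K, ⊤⁆ ≤ K :=
        Subgroup.commutator_top_le_iff_le_upperCentralSeriesStep.mpr le_rfl
    _ ≤ pPow p (Subgroup.upperCentralSeriesStep K) ⊔ etaUp p G i :=
        sup_le_sup_right (pPow_mono p hle) _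

end etaUp

theorem etaSucc_mod_eq_center_general {p : ℕ}
    {G : Type*} [Group G] (k : ℕ) :
    Subgroup.map (QuotientGroup.mk' (pPow p (etaUp p G (k + 1)) ⊔ etaUp p G k))
        (etaUp p G (k + 1)) =
      Subgroup.center (G ⧸ (pPow p (etaUp p G (k + 1)) ⊔ etaUp p G k)) := by
  rw [← Subgroup.map_mk'_upperCentralSeriesStep]
  exact congrArg _ etaUp_succ_eq_upperCentralSeriesStep

/-- `η_{k+1}(G)/(η_{k+1}(G)^p η_k(G)) = Z(G/(η_{k+1}(G)^p η_k(G)))`. -/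
theorem etaSucc_mod_eq_center {p : ℕ} (hp : p.Prime) (hodd : Odd p)
    {G : Type*} [Group G] [Finite G] (hG : IsPGroup p G) (k : ℕ) :
    Subgroup.map (QuotientGroup.mk' (pPow p (etaUp p G (k + 1)) ⊔ etaUp p G k))
        (etaUp p G (k + 1)) =
      Subgroup.center (G ⧸ (pPow p (etaUp p G (k + 1)) ⊔ etaUp p G k)) :=
  etaSucc_mod_eq_center_general k
end

section
/- Let p be an odd prime and G a nonabelian group of order p^3. If G has exponent p, then η(G) = Z(G); if G has exponent p^2, then G is powerful and η(G) = G. -/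
section

open Subgroup

variable {G : Type*} [Group G] {p : ℕ}

lemma pPow_eq_bot_iff {N : Subgroup G} : pPow p N = ⊥ ↔ ∀ x ∈ N, x ^ p = 1 := by
  simp [pPow, closure_eq_bot_iff, Set.subset_def]

lemma pPow_top_eq_bot_iff : pPow p (⊤ : Subgroup G) = ⊥ ↔ Monoid.exponent G ∣ p := by
  simp [pPow_eq_bot_iff, Monoid.exponent_dvd_iff_forall_pow_eq_one]

lemma etaUp_one_eq :
    etaUp p G 1 = sSup {N : Subgroup G | N.Normal ∧ ⁅N, (⊤ : Subgroup G)⁆ ≤ pPow p N} := by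
  simp [etaUp]

lemma le_etaUp_one {N : Subgroup G} (hN : N.Normal) (h : ⁅N, (⊤ : Subgroup G)⁆ ≤ pPow p N) :
    N ≤ etaUp p G 1 := by
  rw [etaUp_one_eq]
  exact le_sSup ⟨hN, h⟩

lemma etaUp_one_eq_center_of_exponent_dvd (h : Monoid.exponent G ∣ p) :
    etaUp p G 1 = center G := by
  have hpPow (N : Subgroup G) : pPow p N = ⊥ :=
    pPow_eq_bot_iff.2 fun x _ => Monoid.exponent_dvd_iff_forall_pow_eq_one.1 h x
  have hcentral (N : Subgroup G) : ⁅N, (⊤ : Subgroup G)⁆ ≤ ⊥ ↔ N ≤ center G := by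
    rw [le_bot_iff, commutator_eq_bot_iff_le_centralizer, coe_top, centralizer_univ]
  refine le_antisymm ?_ (le_etaUp_one inferInstance ((hcentral _).2 le_rfl |>.trans bot_le))
  rw [etaUp_one_eq]
  exact sSup_le fun N ⟨_, hN⟩ => (hcentral N).1 (hpPow N ▸ hN)

lemma card_quotient_dvd_of_card_eq_prime_pow_succ {n : ℕ} (hp : p.Prime)
    (hcard : Nat.card G = p ^ (n + 1)) {H : Subgroup G} (hH : H ≠ ⊥) :
    Nat.card (G ⧸ H) ∣ p ^ n := by
  have : Finite G := Nat.finite_of_card_ne_zero (by simp [hcard, hp.ne_zero])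
  have hp_dvd_card : p ∣ Nat.card H := by
    obtain ⟨k, -, hk⟩ := (Nat.dvd_prime_pow hp).1 (hcard ▸ H.card_subgroup_dvd_card)
    have : k ≠ 0 := by
      rintro rfl
      exact (H.one_lt_card_iff_ne_bot.2 hH).ne' (by simpa using hk)
    exact hk ▸ dvd_pow_self p this
  refine Nat.dvd_of_mul_dvd_mul_right hp.pos ?_
  rw [← pow_succ, ← hcard, H.card_eq_card_quotient_mul_card_subgroup]
  exact mul_dvd_mul_left _ hp_dvd_card

lemma isMulCommutative_of_card_dvd_prime_sq (hp : p.Prime) {Q : Type*} [Group Q]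
    (hQ : Nat.card Q ∣ p ^ 2) : IsMulCommutative Q := by
  have : Fact p.Prime := ⟨hp⟩
  obtain ⟨k, hk, hQk⟩ := (Nat.dvd_prime_pow hp).1 hQ
  interval_cases k
  · have : Subsingleton Q := (Nat.card_eq_one_iff_unique.1 (by simpa using hQk)).1
    exact ⟨⟨fun _ _ => Subsingleton.elim _ _⟩⟩
  · have := isCyclic_of_prime_card (by simpa using hQk)
    exact ⟨⟨(IsCyclic.commGroup (α := Q)).mul_comm⟩⟩
  · exact IsPGroup.isMulCommutative_of_card_eq_prime_sq hQk

lemma commutator_top_le_pPow_top_of_card_eq_prime_pow_three (hp : p.Prime)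
    (hcard : Nat.card G = p ^ 3) (hpPow : pPow p (⊤ : Subgroup G) ≠ ⊥) :
    ⁅(⊤ : Subgroup G), (⊤ : Subgroup G)⁆ ≤ pPow p ⊤ := by
  have : (pPow p (⊤ : Subgroup G)).Normal := pPow_normal p inferInstance
  exact Normal.quotient_commutative_iff_commutator_le.1 <| isMulCommutative_of_card_dvd_prime_sq hp
    (card_quotient_dvd_of_card_eq_prime_pow_succ hp hcard hpPow)

end

theorem eta_of_order_p_cubed_general {p : ℕ} (hp : p.Prime)
    {G : Type*} [Group G] (hcard : Nat.card G = p ^ 3) :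
    (Monoid.exponent G = p → etaUp p G 1 = Subgroup.center G) ∧
      (Monoid.exponent G = p ^ 2 →
        ⁅(⊤ : Subgroup G), (⊤ : Subgroup G)⁆ ≤ pPow p (⊤ : Subgroup G) ∧
          etaUp p G 1 = ⊤) := by
  refine ⟨fun hexp => etaUp_one_eq_center_of_exponent_dvd hexp.dvd, fun hexp => ?_⟩
  have hpPow : pPow p (⊤ : Subgroup G) ≠ ⊥ := fun h => by
    have : p ^ 2 ∣ p ^ 1 := by simpa [hexp] using pPow_top_eq_bot_iff.1 h
    exact absurd ((Nat.pow_dvd_pow_iff_le_right hp.one_lt).1 this) (by norm_num)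
  have hpowerful := commutator_top_le_pPow_top_of_card_eq_prime_pow_three hp hcard hpPow
  exact ⟨hpowerful, top_le_iff.1 (le_etaUp_one inferInstance hpowerful)⟩

/-- for a nonabelian group of order `p³`: if it has exponent `p` then
`η(G) = Z(G)`; if it has exponent `p²` then `G` is powerful and `η(G) = G`. -/
theorem eta_of_order_p_cubed {p : ℕ} (hp : p.Prime) (hodd : Odd p)
    {G : Type*} [Group G] [Finite G] (hcard : Nat.card G = p ^ 3)
    (hna : ¬ ∀ a b : G, a * b = b * a) :
    (Monoid.exponent G = p → etaUp p G 1 = Subgroup.center G) ∧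
      (Monoid.exponent G = p ^ 2 →
        ⁅(⊤ : Subgroup G), (⊤ : Subgroup G)⁆ ≤ pPow p (⊤ : Subgroup G) ∧
          etaUp p G 1 = ⊤) :=
  eta_of_order_p_cubed_general hp hcard
end
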